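/- Let I ⊂ ℝ be an open time interval and C : ℝ × I → ℝ² a smooth family of curves with [C, C_p] ≠ 0 everywhere and ε[C_p, C_pp]/[C, C_p] > 0 everywhere for a fixed ε ∈ {−1,+1}. Define the centro-affine metric g := sqrt(ε[C_p,C_pp]/[C,C_p]), the arc-length derivative D_s f := (1/g)∂f/∂p, and the centro-affine curvature κ := sqrt(ε[C,C_p]/[C_p,C_pp])·( [C,C_pp]/[C,C_p] + ([C,C_pp][C_p,C_pp] − [C,C_p][C_p,C_ppp])/(2[C_p,C_pp][C,C_p]) ). Suppose C evolves by the centro-affine heat flow ∂C/∂t = D_s(D_s C). Then the metric satisfies ∂g/∂t = ∂κ/∂p, and the curvature satisfies the inviscid Burgers' equation ∂κ/∂t = κ·D_sκ = κ·(∂κ/∂p)/g. -/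

import Mathlib

open Real

namespace CentroAffine

/-- The planar cross product `[a,b] = a₁b₂ − a₂b₁`. -/
def br (a b : ℝ × ℝ) : ℝ := a.1 * b.2 - a.2 * b.1

/-- First parameter-derivative `C_p` of a time-dependent family of plane curves. -/
noncomputable def Cp (C : ℝ → ℝ → ℝ × ℝ) (p t : ℝ) : ℝ × ℝ :=
  deriv (fun q => C q t) p

/-- Second parameter-derivative `C_pp`. -/
noncomputable def Cpp (C : ℝ → ℝ → ℝ × ℝ) (p t : ℝ) : ℝ × ℝ :=
  deriv (fun q => Cp C q t) p

/-- Third parameter-derivative `C_ppp`. -/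
noncomputable def Cppp (C : ℝ → ℝ → ℝ × ℝ) (p t : ℝ) : ℝ × ℝ :=
  deriv (fun q => Cpp C q t) p

/-- The centro-affine metric `g = sqrt(ε[C_p,C_pp]/[C,C_p])` of the family. -/
noncomputable def met (ε : ℝ) (C : ℝ → ℝ → ℝ × ℝ) (p t : ℝ) : ℝ :=
  Real.sqrt (ε * (br (Cp C p t) (Cpp C p t) / br (C p t) (Cp C p t)))

/-- The centro-affine arc-length derivative `D_s f = (1/g)·∂f/∂p` of a scalar quantity. -/
noncomputable def DsR (ε : ℝ) (C : ℝ → ℝ → ℝ × ℝ) (f : ℝ → ℝ → ℝ) (p t : ℝ) : ℝ :=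
  (1 / met ε C p t) * deriv (fun q => f q t) p

/-- The centro-affine arc-length derivative `D_s F = (1/g)·∂F/∂p` of an ℝ²-valued quantity. -/
noncomputable def DsV (ε : ℝ) (C : ℝ → ℝ → ℝ × ℝ) (F : ℝ → ℝ → ℝ × ℝ) (p t : ℝ) : ℝ × ℝ :=
  (1 / met ε C p t) • deriv (fun q => F q t) p

/-- The centro-affine curvature of the family. -/
noncomputable def curv (ε : ℝ) (C : ℝ → ℝ → ℝ × ℝ) (p t : ℝ) : ℝ :=
  Real.sqrt (ε * (br (C p t) (Cp C p t) / br (Cp C p t) (Cpp C p t))) *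
    (br (C p t) (Cpp C p t) / br (C p t) (Cp C p t) +
      (br (C p t) (Cpp C p t) * br (Cp C p t) (Cpp C p t) -
        br (C p t) (Cp C p t) * br (Cp C p t) (Cppp C p t)) /
      (2 * br (Cp C p t) (Cpp C p t) * br (C p t) (Cp C p t)))

end CentroAffine

open CentroAffine

open Filter
open scoped ContDiff Topology

namespace CAProof
open CentroAffine

variable {E : Type*} [NormedAddCommGroup E] [NormedSpace ℝ E]

noncomputable def pd (f : ℝ × ℝ → E) (x : ℝ × ℝ) : E := fderiv ℝ f x (1, 0)
noncomputable def td (f : ℝ × ℝ → E) (x : ℝ × ℝ) : E := fderiv ℝ f x (0, 1)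

lemma hasDerivAt_slice1 {f : ℝ × ℝ → E} {p t : ℝ} (hf : DifferentiableAt ℝ f (p, t)) :
    HasDerivAt (fun q => f (q, t)) (pd f (p, t)) p := by
  have h1 : HasDerivAt (fun q : ℝ => (q, t)) ((1 : ℝ), (0 : ℝ)) p :=
    (hasDerivAt_id p).prodMk (hasDerivAt_const p t)
  exact hf.hasFDerivAt.comp_hasDerivAt p h1

lemma hasDerivAt_slice2 {f : ℝ × ℝ → E} {p t : ℝ} (hf : DifferentiableAt ℝ f (p, t)) :
    HasDerivAt (fun τ => f (p, τ)) (td f (p, t)) t := by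
  have h1 : HasDerivAt (fun τ : ℝ => (p, τ)) ((0 : ℝ), (1 : ℝ)) t :=
    (hasDerivAt_const t p).prodMk (hasDerivAt_id t)
  exact hf.hasFDerivAt.comp_hasDerivAt t h1

lemma contDiffOn_pd {f : ℝ × ℝ → E} {U : Set (ℝ × ℝ)} (hf : ContDiffOn ℝ ∞ f U)
    (hU : IsOpen U) : ContDiffOn ℝ ∞ (pd f) U :=
  (hf.fderiv_of_isOpen hU (le_of_eq rfl)).clm_apply contDiffOn_const

lemma diffAt {f : ℝ × ℝ → E} {U : Set (ℝ × ℝ)} (hf : ContDiffOn ℝ ∞ f U)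
    (hU : IsOpen U) {x : ℝ × ℝ} (hx : x ∈ U) : DifferentiableAt ℝ f x :=
  (hf.contDiffAt (hU.mem_nhds hx)).differentiableAt (by norm_cast)

lemma td_pd_swap {f : ℝ × ℝ → E} {U : Set (ℝ × ℝ)} (hf : ContDiffOn ℝ ∞ f U)
    (hU : IsOpen U) {x : ℝ × ℝ} (hx : x ∈ U) : td (pd f) x = pd (td f) x := by
  have hmem := hU.mem_nhds hx
  have hAt : ContDiffAt ℝ ∞ f x := hf.contDiffAt hmem
  have hsymm : IsSymmSndFDerivAt ℝ f x := hAt.isSymmSndFDerivAt (by rw [minSmoothness_of_isRCLikeNormedField]; exact WithTop.coe_le_coe.mpr le_top)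
  have hdf : DifferentiableAt ℝ (fderiv ℝ f) x :=
    (hAt.fderiv_right (m := ∞) (le_of_eq rfl)).differentiableAt (by norm_cast)
  have h1 : HasFDerivAt (pd f)
      ((ContinuousLinearMap.apply ℝ E ((1 : ℝ), (0 : ℝ))).comp (fderiv ℝ (fderiv ℝ f) x)) x :=
    (ContinuousLinearMap.apply ℝ E ((1 : ℝ), (0 : ℝ))).hasFDerivAt.comp x hdf.hasFDerivAt
  have h2 : HasFDerivAt (td f)
      ((ContinuousLinearMap.apply ℝ E ((0 : ℝ), (1 : ℝ))).comp (fderiv ℝ (fderiv ℝ f) x)) x :=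
    (ContinuousLinearMap.apply ℝ E ((0 : ℝ), (1 : ℝ))).hasFDerivAt.comp x hdf.hasFDerivAt
  have e1 : td (pd f) x = fderiv ℝ (fderiv ℝ f) x (0, 1) (1, 0) := by
    simp [td, h1.fderiv, ContinuousLinearMap.comp_apply, ContinuousLinearMap.apply_apply]
  have e2 : pd (td f) x = fderiv ℝ (fderiv ℝ f) x (1, 0) (0, 1) := by
    simp [pd, h2.fderiv, ContinuousLinearMap.comp_apply, ContinuousLinearMap.apply_apply]
  rw [e1, e2, hsymm]

lemma pd_congr {f g : ℝ × ℝ → E} {U : Set (ℝ × ℝ)} (hU : IsOpen U)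
    (h : ∀ y ∈ U, f y = g y) {x : ℝ × ℝ} (hx : x ∈ U) : pd f x = pd g x := by
  unfold pd
  rw [Filter.EventuallyEq.fderiv_eq (eventually_of_mem (hU.mem_nhds hx) h)]

lemma hasDerivAt_br {f g : ℝ → ℝ × ℝ} {f' g' : ℝ × ℝ} {x : ℝ}
    (hf : HasDerivAt f f' x) (hg : HasDerivAt g g' x) :
    HasDerivAt (fun q => br (f q) (g q)) (br f' (g x) + br (f x) g') x := by
  have h1 : HasDerivAt (fun q => (f q).1) f'.1 x :=
    (ContinuousLinearMap.fst ℝ ℝ ℝ).hasFDerivAt.comp_hasDerivAt x hf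
  have h2 : HasDerivAt (fun q => (f q).2) f'.2 x :=
    (ContinuousLinearMap.snd ℝ ℝ ℝ).hasFDerivAt.comp_hasDerivAt x hf
  have h3 : HasDerivAt (fun q => (g q).1) g'.1 x :=
    (ContinuousLinearMap.fst ℝ ℝ ℝ).hasFDerivAt.comp_hasDerivAt x hg
  have h4 : HasDerivAt (fun q => (g q).2) g'.2 x :=
    (ContinuousLinearMap.snd ℝ ℝ ℝ).hasFDerivAt.comp_hasDerivAt x hg
  have := (h1.mul h4).sub (h2.mul h3)
  refine this.congr_deriv ?_
  simp only [br]
  ring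

lemma contDiffOn_br {f g : ℝ × ℝ → ℝ × ℝ} {U : Set (ℝ × ℝ)}
    (hf : ContDiffOn ℝ ∞ f U) (hg : ContDiffOn ℝ ∞ g U) :
    ContDiffOn ℝ ∞ (fun x => br (f x) (g x)) U :=
  (hf.fst.mul hg.snd).sub (hf.snd.mul hg.fst)

lemma br_dec1 (u v w : ℝ × ℝ) : br u v * w.1 = br w v * u.1 + br u w * v.1 := by
  simp only [br]; ring

lemma br_dec2 (u v w : ℝ × ℝ) : br u v * w.2 = br w v * u.2 + br u w * v.2 := by
  simp only [br]; ring

lemma br_quad (u v w z : ℝ × ℝ) :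
    br u v * br w z = br w v * br u z + br u w * br v z := by
  simp only [br]; ring

lemma br_swap (u v : ℝ × ℝ) : br u v = -br v u := by simp only [br]; ring

lemma br_self (u : ℝ × ℝ) : br u u = 0 := by simp only [br]; ring

/-! two-variable versions of the curve derivatives -/

variable (C : ℝ → ℝ → ℝ × ℝ) in
noncomputable def Fu : ℝ × ℝ → ℝ × ℝ := fun x => C x.1 x.2

variable (C : ℝ → ℝ → ℝ × ℝ) in
noncomputable def D1 : ℝ × ℝ → ℝ × ℝ := pd (Fu C)

variable (C : ℝ → ℝ → ℝ × ℝ) in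
noncomputable def D2 : ℝ × ℝ → ℝ × ℝ := pd (D1 C)

variable (C : ℝ → ℝ → ℝ × ℝ) in
noncomputable def D3 : ℝ × ℝ → ℝ × ℝ := pd (D2 C)

variable (ε : ℝ) (C : ℝ → ℝ → ℝ × ℝ) in
noncomputable def lam : ℝ × ℝ → ℝ := fun x =>
  ε * (3 * br (D1 C x) (D2 C x) * br (Fu C x) (D2 C x)
      - br (Fu C x) (D1 C x) * br (D1 C x) (D3 C x)) / (2 * br (D1 C x) (D2 C x) ^ 2)

variable (ε : ℝ) (C : ℝ → ℝ → ℝ × ℝ) in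
noncomputable def Phi : ℝ × ℝ → ℝ × ℝ := fun x =>
  (-ε) • Fu C x + lam ε C x • D1 C x

variable {C : ℝ → ℝ → ℝ × ℝ} {I : Set ℝ}

lemma hUopen (hI : IsOpen I) : IsOpen (Set.univ ×ˢ I : Set (ℝ × ℝ)) := isOpen_univ.prod hI

lemma memU {q τ : ℝ} (hτ : τ ∈ I) : (q, τ) ∈ (Set.univ ×ˢ I : Set (ℝ × ℝ)) := ⟨trivial, hτ⟩

section
variable (hI : IsOpen I) (hF : ContDiffOn ℝ ∞ (Fu C) (Set.univ ×ˢ I))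
include hI hF

lemma hD1 : ContDiffOn ℝ ∞ (D1 C) (Set.univ ×ˢ I) := contDiffOn_pd hF (hUopen hI)

lemma hD2 : ContDiffOn ℝ ∞ (D2 C) (Set.univ ×ˢ I) := contDiffOn_pd (hD1 hI hF) (hUopen hI)

lemma hD3 : ContDiffOn ℝ ∞ (D3 C) (Set.univ ×ˢ I) := contDiffOn_pd (hD2 hI hF) (hUopen hI)

lemma sliceC {τ : ℝ} (hτ : τ ∈ I) (q : ℝ) :
    HasDerivAt (fun x => C x τ) (D1 C (q, τ)) q :=
  hasDerivAt_slice1 (diffAt hF (hUopen hI) (memU hτ))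

lemma cp_eq {τ : ℝ} (hτ : τ ∈ I) (q : ℝ) : Cp C q τ = D1 C (q, τ) :=
  (sliceC hI hF hτ q).deriv

lemma sliceCp {τ : ℝ} (hτ : τ ∈ I) (q : ℝ) :
    HasDerivAt (fun x => Cp C x τ) (D2 C (q, τ)) q := by
  have h : (fun x => Cp C x τ) = fun x => D1 C (x, τ) := funext fun x => cp_eq hI hF hτ x
  rw [h]
  exact hasDerivAt_slice1 (diffAt (hD1 hI hF) (hUopen hI) (memU hτ))

lemma cpp_eq {τ : ℝ} (hτ : τ ∈ I) (q : ℝ) : Cpp C q τ = D2 C (q, τ) :=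
  (sliceCp hI hF hτ q).deriv

lemma sliceCpp {τ : ℝ} (hτ : τ ∈ I) (q : ℝ) :
    HasDerivAt (fun x => Cpp C x τ) (D3 C (q, τ)) q := by
  have h : (fun x => Cpp C x τ) = fun x => D2 C (x, τ) := funext fun x => cpp_eq hI hF hτ x
  rw [h]
  exact hasDerivAt_slice1 (diffAt (hD2 hI hF) (hUopen hI) (memU hτ))

lemma cppp_eq {τ : ℝ} (hτ : τ ∈ I) (q : ℝ) : Cppp C q τ = D3 C (q, τ) :=
  (sliceCpp hI hF hτ q).deriv

lemma sliceCppp {τ : ℝ} (hτ : τ ∈ I) (q : ℝ) :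
    HasDerivAt (fun x => Cppp C x τ) (pd (D3 C) (q, τ)) q := by
  have h : (fun x => Cppp C x τ) = fun x => D3 C (x, τ) := funext fun x => cppp_eq hI hF hτ x
  rw [h]
  exact hasDerivAt_slice1 (diffAt (hD3 hI hF) (hUopen hI) (memU hτ))

/-- `a' = c` -/
lemma brA_deriv {τ : ℝ} (hτ : τ ∈ I) (q : ℝ) :
    HasDerivAt (fun x => br (C x τ) (Cp C x τ)) (br (C q τ) (Cpp C q τ)) q := by
  have h := hasDerivAt_br (sliceC hI hF hτ q) (sliceCp hI hF hτ q)
  rw [← cp_eq hI hF hτ q, ← cpp_eq hI hF hτ q] at h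
  simpa [br_self] using h

/-- `b' = d` -/
lemma brB_deriv {τ : ℝ} (hτ : τ ∈ I) (q : ℝ) :
    HasDerivAt (fun x => br (Cp C x τ) (Cpp C x τ)) (br (Cp C q τ) (Cppp C q τ)) q := by
  have h := hasDerivAt_br (sliceCp hI hF hτ q) (sliceCpp hI hF hτ q)
  rw [← cpp_eq hI hF hτ q, ← cppp_eq hI hF hτ q] at h
  simpa [br_self] using h

/-- `c' = b + e` -/
lemma brC_deriv {τ : ℝ} (hτ : τ ∈ I) (q : ℝ) :
    HasDerivAt (fun x => br (C x τ) (Cpp C x τ))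
      (br (Cp C q τ) (Cpp C q τ) + br (C q τ) (Cppp C q τ)) q := by
  have h := hasDerivAt_br (sliceC hI hF hτ q) (sliceCpp hI hF hτ q)
  rw [← cp_eq hI hF hτ q, ← cppp_eq hI hF hτ q] at h
  exact h

/-- `d' = [C_pp,C_ppp] + [C_p,C_pppp]` -/
lemma brD_deriv {τ : ℝ} (hτ : τ ∈ I) (q : ℝ) :
    HasDerivAt (fun x => br (Cp C x τ) (Cppp C x τ))
      (br (Cpp C q τ) (Cppp C q τ) + br (Cp C q τ) (pd (D3 C) (q, τ))) q := by
  have h := hasDerivAt_br (sliceCp hI hF hτ q) (sliceCppp hI hF hτ q)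
  rw [← cpp_eq hI hF hτ q] at h
  exact h

end

section
variable {ε : ℝ}
variable (hreg : ∀ p : ℝ, ∀ t ∈ I, br (C p t) (Cp C p t) ≠ 0 ∧
      0 < ε * (br (Cp C p t) (Cpp C p t) / br (C p t) (Cp C p t)))
include hreg

lemma met_pos {τ : ℝ} (hτ : τ ∈ I) (q : ℝ) : 0 < met ε C q τ :=
  Real.sqrt_pos.mpr (hreg q τ hτ).2

lemma met_sq {τ : ℝ} (hτ : τ ∈ I) (q : ℝ) :
    met ε C q τ ^ 2 = ε * (br (Cp C q τ) (Cpp C q τ) / br (C q τ) (Cp C q τ)) :=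
  Real.sq_sqrt (le_of_lt (hreg q τ hτ).2)

lemma bne {τ : ℝ} (hτ : τ ∈ I) (q : ℝ) : br (Cp C q τ) (Cpp C q τ) ≠ 0 := by
  intro h
  have h2 := (hreg q τ hτ).2
  rw [h] at h2
  simp at h2

lemma b_sub {ε' : ℝ} (hε2 : ε' * ε' = 1)
    (hreg' : ∀ p : ℝ, ∀ t ∈ I, br (C p t) (Cp C p t) ≠ 0 ∧
      0 < ε' * (br (Cp C p t) (Cpp C p t) / br (C p t) (Cp C p t)))
    {τ : ℝ} (hτ : τ ∈ I) (q : ℝ) :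
    br (Cp C q τ) (Cpp C q τ) = ε' * (met ε' C q τ ^ 2 * br (C q τ) (Cp C q τ)) := by
  have hg2 := met_sq hreg' hτ q
  have ha := (hreg' q τ hτ).1
  rw [hg2]
  field_simp
  linear_combination (-br (Cp C q τ) (Cpp C q τ)) * hε2

variable (hI : IsOpen I) (hF : ContDiffOn ℝ ∞ (Fu C) (Set.univ ×ˢ I))
include hI hF

lemma met_deriv {τ : ℝ} (hτ : τ ∈ I) (q : ℝ) :
    HasDerivAt (fun x => met ε C x τ)
      (ε * ((br (Cp C q τ) (Cppp C q τ) * br (C q τ) (Cp C q τ)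
          - br (Cp C q τ) (Cpp C q τ) * br (C q τ) (Cpp C q τ)) / br (C q τ) (Cp C q τ) ^ 2)
        / (2 * met ε C q τ)) q := by
  have hq := ((brB_deriv hI hF hτ q).div (brA_deriv hI hF hτ q) (hreg q τ hτ).1).const_mul ε
  have harg : ε * (br (Cp C q τ) (Cpp C q τ) / br (C q τ) (Cp C q τ)) ≠ 0 :=
    ne_of_gt (hreg q τ hτ).2
  have h := (Real.hasDerivAt_sqrt harg).comp q hq
  have h2 : HasDerivAt (fun x => met ε C x τ)
      (1 / (2 * Real.sqrt (ε * (br (Cp C q τ) (Cpp C q τ) / br (C q τ) (Cp C q τ)))) *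
        (ε * ((br (Cp C q τ) (Cppp C q τ) * br (C q τ) (Cp C q τ)
          - br (Cp C q τ) (Cpp C q τ) * br (C q τ) (Cpp C q τ)) / br (C q τ) (Cp C q τ) ^ 2))) q := by
    simpa [Function.comp_def, met] using h
  convert h2 using 1
  rw [show met ε C q τ
      = Real.sqrt (ε * (br (Cp C q τ) (Cpp C q τ) / br (C q τ) (Cp C q τ))) from rfl]
  ring

omit hreg in
lemma lam_eq {τ : ℝ} (hτ : τ ∈ I) (q : ℝ) :
    lam ε C (q, τ) = ε * (3 * br (Cp C q τ) (Cpp C q τ) * br (C q τ) (Cpp C q τ)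
      - br (C q τ) (Cp C q τ) * br (Cp C q τ) (Cppp C q τ))
      / (2 * br (Cp C q τ) (Cpp C q τ) ^ 2) := by
  simp only [lam, Fu]
  rw [← cp_eq hI hF hτ q, ← cpp_eq hI hF hτ q, ← cppp_eq hI hF hτ q]

lemma lam_smooth : ContDiffOn ℝ ∞ (lam ε C) (Set.univ ×ˢ I) := by
  apply ContDiffOn.div
  · exact contDiffOn_const.mul
      (((contDiffOn_const.mul (contDiffOn_br (hD1 hI hF) (hD2 hI hF))).mul
        (contDiffOn_br hF (hD2 hI hF))).sub
        ((contDiffOn_br hF (hD1 hI hF)).mul (contDiffOn_br (hD1 hI hF) (hD3 hI hF))))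
  · exact contDiffOn_const.mul ((contDiffOn_br (hD1 hI hF) (hD2 hI hF)).pow 2)
  · intro x hx
    have hb := bne hreg hx.2 x.1
    rw [cp_eq hI hF hx.2 x.1, cpp_eq hI hF hx.2 x.1] at hb
    have hb2 : br (D1 C x) (D2 C x) ≠ 0 := by simpa using hb
    exact mul_ne_zero two_ne_zero (pow_ne_zero 2 hb2)

lemma Phi_smooth : ContDiffOn ℝ ∞ (Phi ε C) (Set.univ ×ˢ I) :=
  ((contDiffOn_const (c := -ε)).smul hF).add ((lam_smooth hreg hI hF).smul (hD1 hI hF))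

lemma flow_phi (hε : ε = 1 ∨ ε = -1)
    (hflow : ∀ p : ℝ, ∀ t ∈ I,
      deriv (fun τ => C p τ) t = DsV ε C (fun q τ => DsV ε C C q τ) p t) :
    ∀ q : ℝ, ∀ τ ∈ I, td (Fu C) (q, τ) = Phi ε C (q, τ) := by
  have hε2 : ε * ε = 1 := by rcases hε with h | h <;> rw [h] <;> norm_num
  intro q τ hτ
  have h0 : td (Fu C) (q, τ) = deriv (fun τ' => C q τ') τ :=
    ((hasDerivAt_slice2 (diffAt hF (hUopen hI) (memU hτ))).deriv).symm
  rw [h0, hflow q τ hτ]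
  have hgd := met_deriv hreg hI hF hτ q
  have hgpos := met_pos hreg hτ q
  have hinv := (hasDerivAt_const q (1 : ℝ)).div hgd (ne_of_gt hgpos)
  have hsm := hinv.smul (sliceCp hI hF hτ q)
  have hder := hsm.deriv
  simp only [Pi.div_apply] at hder
  show (1 / met ε C q τ) • deriv (fun x => DsV ε C C x τ) q = Phi ε C (q, τ)
  rw [show (fun x => DsV ε C C x τ) = ((fun x => 1) / fun x => met ε C x τ) • fun x => Cp C x τ from rfl, hder]
  rw [← cpp_eq hI hF hτ q]
  rw [show Phi ε C (q, τ) = (-ε) • Fu C (q, τ) + lam ε C (q, τ) • D1 C (q, τ) from rfl,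
    lam_eq hI hF hτ q, ← cp_eq hI hF hτ q,
    show Fu C (q, τ) = C q τ from rfl]
  have ha := (hreg q τ hτ).1
  have hb := bne hreg hτ q
  have hb2 := b_sub hreg hε2 hreg hτ q
  have hgne := ne_of_gt hgpos
  rw [Prod.ext_iff]
  refine ⟨?_, ?_⟩
  · have hdec := br_dec1 (C q τ) (Cp C q τ) (Cpp C q τ)
    rw [br_swap (Cpp C q τ) (Cp C q τ)] at hdec
    have hx2 : (Cpp C q τ).1 = (br (C q τ) (Cpp C q τ) * (Cp C q τ).1
        - br (Cp C q τ) (Cpp C q τ) * (C q τ).1) / br (C q τ) (Cp C q τ) := by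
      rw [eq_div_iff ha]
      linarith [hdec]
    simp only [Prod.smul_fst, Prod.fst_add, smul_eq_mul]
    rw [hx2, hb2]
    rcases hε with h | h <;> subst h <;> field_simp <;> ring
  · have hdec := br_dec2 (C q τ) (Cp C q τ) (Cpp C q τ)
    rw [br_swap (Cpp C q τ) (Cp C q τ)] at hdec
    have hx2 : (Cpp C q τ).2 = (br (C q τ) (Cpp C q τ) * (Cp C q τ).2
        - br (Cp C q τ) (Cpp C q τ) * (C q τ).2) / br (C q τ) (Cp C q τ) := by
      rw [eq_div_iff ha]
      linarith [hdec]
    simp only [Prod.smul_snd, Prod.snd_add, smul_eq_mul]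
    rw [hx2, hb2]
    rcases hε with h | h <;> subst h <;> field_simp <;> ring

lemma curv_eq (hε : ε = 1 ∨ ε = -1) {τ : ℝ} (hτ : τ ∈ I) (q : ℝ) :
    curv ε C q τ = met ε C q τ * lam ε C (q, τ) := by
  have hε2 : ε * ε = 1 := by rcases hε with h | h <;> rw [h] <;> norm_num
  have ha := (hreg q τ hτ).1
  have hb := bne hreg hτ q
  have hgpos := met_pos hreg hτ q
  have hgne := ne_of_gt hgpos
  have hb2 := b_sub hreg hε2 hreg hτ q
  rw [lam_eq hI hF hτ q]
  simp only [curv]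
  rcases hε with h | h <;> subst h
  · have h1 : (1 : ℝ) * (br (C q τ) (Cp C q τ) / br (Cp C q τ) (Cpp C q τ))
        = ((1 : ℝ) * (br (Cp C q τ) (Cpp C q τ) / br (C q τ) (Cp C q τ)))⁻¹ := by
      field_simp
    rw [h1, Real.sqrt_inv]
    rw [show Real.sqrt ((1:ℝ) * (br (Cp C q τ) (Cpp C q τ) / br (C q τ) (Cp C q τ)))
        = met 1 C q τ from rfl]
    rw [hb2]
    field_simp
    ring
  · have h1 : (-1 : ℝ) * (br (C q τ) (Cp C q τ) / br (Cp C q τ) (Cpp C q τ))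
        = ((-1 : ℝ) * (br (Cp C q τ) (Cpp C q τ) / br (C q τ) (Cp C q τ)))⁻¹ := by
      field_simp
    rw [h1, Real.sqrt_inv]
    rw [show Real.sqrt ((-1:ℝ) * (br (Cp C q τ) (Cpp C q τ) / br (C q τ) (Cp C q τ)))
        = met (-1) C q τ from rfl]
    rw [hb2]
    field_simp
    ring

end

lemma contDiff_slice {E : Type*} [NormedAddCommGroup E] [NormedSpace ℝ E]
    {f : ℝ × ℝ → E} (hf : ContDiffOn ℝ ∞ f (Set.univ ×ˢ I)) {t : ℝ} (ht : t ∈ I) :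
    ContDiff ℝ ∞ (fun q => f (q, t)) := by
  rw [← contDiffOn_univ]
  exact hf.comp ((contDiff_id.prodMk contDiff_const).contDiffOn) (fun q _ => memU ht)

end CAProof

open CAProof

set_option maxHeartbeats 2000000 in

/-- For a smooth family of centro-affine regular curves evolving by the
centro-affine heat flow `C_t = C_ss`, the metric satisfies `g_t = ∂κ/∂p` (i.e. `g_t = g·κ_s`)
and the curvature satisfies the inviscid Burgers' equation
`κ_t = κ·D_sκ = κ·(∂κ/∂p)/g`. -/
theorem centroAffine_heat_flow_is_inviscid_Burgers
    (ε : ℝ) (hε : ε = 1 ∨ ε = -1) (I : Set ℝ) (hI : IsOpen I)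
    (C : ℝ → ℝ → ℝ × ℝ)
    (hC : ContDiffOn ℝ (⊤ : ℕ∞) (fun q : ℝ × ℝ => C q.1 q.2) (Set.univ ×ˢ I))
    (hreg : ∀ p : ℝ, ∀ t ∈ I, br (C p t) (Cp C p t) ≠ 0 ∧
      0 < ε * (br (Cp C p t) (Cpp C p t) / br (C p t) (Cp C p t)))
    (hflow : ∀ p : ℝ, ∀ t ∈ I,
      deriv (fun τ => C p τ) t = DsV ε C (fun q τ => DsV ε C C q τ) p t) :
    ∀ p : ℝ, ∀ t ∈ I,
      deriv (fun τ => met ε C p τ) t = deriv (fun q => curv ε C q t) p ∧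
      deriv (fun τ => curv ε C p τ) t
        = curv ε C p t * DsR ε C (fun q τ => curv ε C q τ) p t ∧
      deriv (fun τ => curv ε C p τ) t
        = curv ε C p t * (deriv (fun q => curv ε C q t) p / met ε C p t) := by
  intro p t ht
  have hF : ContDiffOn ℝ ∞ (Fu C) (Set.univ ×ˢ I) := hC.of_le (by simp)
  have hU : IsOpen (Set.univ ×ˢ I : Set (ℝ × ℝ)) := hUopen hI
  have hD1s := hD1 hI hF
  have hD2s := hD2 hI hF
  have hD3s := hD3 hI hF
  have hPhis := Phi_smooth hreg hI hF
  have hlams := lam_smooth hreg hI hF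
  have ha := (hreg p t ht).1
  have hbne := bne hreg ht p
  have hgpos := met_pos hreg ht p
  have hgne := ne_of_gt hgpos
  have hε2 : ε * ε = 1 := by rcases hε with h | h <;> rw [h] <;> norm_num
  have hb2 := b_sub hreg hε2 hreg ht p
  have hTF : ∀ y ∈ (Set.univ ×ˢ I : Set (ℝ × ℝ)), td (Fu C) y = Phi ε C y :=
    fun y hy => flow_phi hreg hI hF hε hflow y.1 y.2 hy.2
  have hsw1 : ∀ y ∈ (Set.univ ×ˢ I : Set (ℝ × ℝ)), td (D1 C) y = pd (Phi ε C) y := by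
    intro y hy
    rw [show D1 C = pd (Fu C) from rfl, td_pd_swap hF hU hy]
    exact pd_congr hU hTF hy
  have hsw2 : ∀ y ∈ (Set.univ ×ˢ I : Set (ℝ × ℝ)),
      td (D2 C) y = pd (pd (Phi ε C)) y := by
    intro y hy
    rw [show D2 C = pd (D1 C) from rfl, td_pd_swap hD1s hU hy]
    exact pd_congr hU hsw1 hy
  have hsw3 : ∀ y ∈ (Set.univ ×ˢ I : Set (ℝ × ℝ)),
      td (D3 C) y = pd (pd (pd (Phi ε C))) y := by
    intro y hy
    rw [show D3 C = pd (D2 C) from rfl, td_pd_swap hD2s hU hy]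
    exact pd_congr hU hsw2 hy
  -- the time-t slice of lam and its derivatives
  have hLsm : ContDiff ℝ ∞ (fun q => lam ε C (q, t)) := contDiff_slice hlams ht
  have hLdiff : Differentiable ℝ (fun q => lam ε C (q, t)) := hLsm.differentiable (by norm_cast)
  have hL1sm : ContDiff ℝ ∞ (deriv (fun q => lam ε C (q, t))) :=
    (contDiff_infty_iff_deriv.mp hLsm).2
  have hL1diff : Differentiable ℝ (deriv (fun q => lam ε C (q, t))) :=
    hL1sm.differentiable (by norm_cast)
  have hL2sm : ContDiff ℝ ∞ (deriv (deriv (fun q => lam ε C (q, t)))) :=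
    (contDiff_infty_iff_deriv.mp hL1sm).2
  have hL2diff : Differentiable ℝ (deriv (deriv (fun q => lam ε C (q, t)))) :=
    hL2sm.differentiable (by norm_cast)
  -- the slice of Phi
  have hphi_fun : (fun q => Phi ε C (q, t))
      = fun q => (-ε) • C q t + lam ε C (q, t) • Cp C q t := by
    funext q
    show (-ε) • Fu C (q, t) + lam ε C (q, t) • D1 C (q, t) = _
    rw [← cp_eq hI hF ht q]
    rfl
  have hA1d : ∀ q, HasDerivAt (fun q' => Phi ε C (q', t))
      ((-ε) • Cp C q t + (lam ε C (q, t) • Cpp C q t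
        + deriv (fun q'' => lam ε C (q'', t)) q • Cp C q t)) q := by
    intro q
    rw [hphi_fun]
    have h := ((sliceC hI hF ht q).const_smul (-ε)).add
      (((hLdiff q).hasDerivAt).smul (sliceCp hI hF ht q))
    rw [← cp_eq hI hF ht q, ← cpp_eq hI hF ht q] at h
    exact h
  have hPdPhi : ∀ q, pd (Phi ε C) (q, t)
      = (-ε) • Cp C q t + (lam ε C (q, t) • Cpp C q t
        + deriv (fun q'' => lam ε C (q'', t)) q • Cp C q t) :=
    fun q => ((hasDerivAt_slice1 (diffAt hPhis hU (memU ht))).deriv).symm.trans (hA1d q).deriv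
  have hA2d : ∀ q, HasDerivAt (fun q' => pd (Phi ε C) (q', t))
      ((-ε) • Cpp C q t + ((lam ε C (q, t) • Cppp C q t
          + deriv (fun q'' => lam ε C (q'', t)) q • Cpp C q t)
        + (deriv (fun q'' => lam ε C (q'', t)) q • Cpp C q t
          + deriv (deriv (fun q'' => lam ε C (q'', t))) q • Cp C q t))) q := by
    intro q
    rw [funext hPdPhi]
    have h := ((sliceCp hI hF ht q).const_smul (-ε)).add
      ((((hLdiff q).hasDerivAt).smul (sliceCpp hI hF ht q)).add
        (((hL1diff q).hasDerivAt).smul (sliceCp hI hF ht q)))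
    rw [← cpp_eq hI hF ht q, ← cppp_eq hI hF ht q] at h
    exact h
  have hPd2Phi : ∀ q, pd (pd (Phi ε C)) (q, t)
      = (-ε) • Cpp C q t + ((lam ε C (q, t) • Cppp C q t
          + deriv (fun q'' => lam ε C (q'', t)) q • Cpp C q t)
        + (deriv (fun q'' => lam ε C (q'', t)) q • Cpp C q t
          + deriv (deriv (fun q'' => lam ε C (q'', t))) q • Cp C q t)) :=
    fun q => ((hasDerivAt_slice1 (diffAt (contDiffOn_pd hPhis hU) hU (memU ht))).deriv).symm.trans
      (hA2d q).deriv
  have hA3d : HasDerivAt (fun q' => pd (pd (Phi ε C)) (q', t))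
      ((-ε) • Cppp C p t + (((lam ε C (p, t) • pd (D3 C) (p, t)
          + deriv (fun q'' => lam ε C (q'', t)) p • Cppp C p t)
        + (deriv (fun q'' => lam ε C (q'', t)) p • Cppp C p t
          + deriv (deriv (fun q'' => lam ε C (q'', t))) p • Cpp C p t))
        + ((deriv (fun q'' => lam ε C (q'', t)) p • Cppp C p t
          + deriv (deriv (fun q'' => lam ε C (q'', t))) p • Cpp C p t)
        + (deriv (deriv (fun q'' => lam ε C (q'', t))) p • Cpp C p t
          + deriv (deriv (deriv (fun q'' => lam ε C (q'', t)))) p • Cp C p t)))) p := by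
    rw [funext hPd2Phi]
    have h := ((sliceCpp hI hF ht p).const_smul (-ε)).add
      (((((hLdiff p).hasDerivAt).smul (sliceCppp hI hF ht p)).add
          (((hL1diff p).hasDerivAt).smul (sliceCpp hI hF ht p))).add
        ((((hL1diff p).hasDerivAt).smul (sliceCpp hI hF ht p)).add
          (((hL2diff p).hasDerivAt).smul (sliceCp hI hF ht p))))
    rw [← cpp_eq hI hF ht p, ← cppp_eq hI hF ht p] at h
    exact h
  have hPd3Phi : pd (pd (pd (Phi ε C))) (p, t)
      = (-ε) • Cppp C p t + (((lam ε C (p, t) • pd (D3 C) (p, t)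
          + deriv (fun q'' => lam ε C (q'', t)) p • Cppp C p t)
        + (deriv (fun q'' => lam ε C (q'', t)) p • Cppp C p t
          + deriv (deriv (fun q'' => lam ε C (q'', t))) p • Cpp C p t))
        + ((deriv (fun q'' => lam ε C (q'', t)) p • Cppp C p t
          + deriv (deriv (fun q'' => lam ε C (q'', t))) p • Cpp C p t)
        + (deriv (deriv (fun q'' => lam ε C (q'', t))) p • Cpp C p t
          + deriv (deriv (deriv (fun q'' => lam ε C (q'', t)))) p • Cp C p t))) :=
    ((hasDerivAt_slice1
      (diffAt (contDiffOn_pd (contDiffOn_pd hPhis hU) hU) hU (memU ht))).deriv).symm.trans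
      hA3d.deriv
  -- time derivatives of the curve and its p-derivatives
  have htC0 : HasDerivAt (fun τ => C p τ) (Phi ε C (p, t)) t := by
    have h := hasDerivAt_slice2 (diffAt hF hU (memU (q := p) ht))
    rw [hTF (p, t) (memU ht)] at h
    exact h
  have htC1 : HasDerivAt (fun τ => Cp C p τ) (pd (Phi ε C) (p, t)) t := by
    have h := hasDerivAt_slice2 (diffAt hD1s hU (memU (q := p) ht))
    rw [hsw1 (p, t) (memU ht)] at h
    refine h.congr_of_eventuallyEq ?_
    filter_upwards [hI.mem_nhds ht] with τ hτ
    exact cp_eq hI hF hτ p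
  have htC2 : HasDerivAt (fun τ => Cpp C p τ) (pd (pd (Phi ε C)) (p, t)) t := by
    have h := hasDerivAt_slice2 (diffAt hD2s hU (memU (q := p) ht))
    rw [hsw2 (p, t) (memU ht)] at h
    refine h.congr_of_eventuallyEq ?_
    filter_upwards [hI.mem_nhds ht] with τ hτ
    exact cpp_eq hI hF hτ p
  have htC3 : HasDerivAt (fun τ => Cppp C p τ) (pd (pd (pd (Phi ε C))) (p, t)) t := by
    have h := hasDerivAt_slice2 (diffAt hD3s hU (memU (q := p) ht))
    rw [hsw3 (p, t) (memU ht)] at h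
    refine h.congr_of_eventuallyEq ?_
    filter_upwards [hI.mem_nhds ht] with τ hτ
    exact cppp_eq hI hF hτ p
  -- time derivatives of the four brackets
  have htA : HasDerivAt (fun τ => br (C p τ) (Cp C p τ))
      (-2 * ε * br (C p t) (Cp C p t)
        + deriv (fun q => lam ε C (q, t)) p * br (C p t) (Cp C p t)
        + lam ε C (p, t) * br (C p t) (Cpp C p t)) t := by
    have h := hasDerivAt_br htC0 htC1
    rw [congrFun hphi_fun p, hPdPhi p] at h
    convert h using 1
    simp only [br, Prod.fst_add, Prod.snd_add, Prod.smul_fst, Prod.smul_snd, smul_eq_mul]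
    ring
  have htB : HasDerivAt (fun τ => br (Cp C p τ) (Cpp C p τ))
      (-2 * ε * br (Cp C p t) (Cpp C p t)
        + 3 * deriv (fun q => lam ε C (q, t)) p * br (Cp C p t) (Cpp C p t)
        + lam ε C (p, t) * br (Cp C p t) (Cppp C p t)) t := by
    have h := hasDerivAt_br htC1 htC2
    rw [hPdPhi p, hPd2Phi p] at h
    convert h using 1
    simp only [br, Prod.fst_add, Prod.snd_add, Prod.smul_fst, Prod.smul_snd, smul_eq_mul]
    ring
  have htCc : HasDerivAt (fun τ => br (C p τ) (Cpp C p τ))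
      (-2 * ε * br (C p t) (Cpp C p t)
        + lam ε C (p, t) * br (Cp C p t) (Cpp C p t)
        + deriv (deriv (fun q => lam ε C (q, t))) p * br (C p t) (Cp C p t)
        + 2 * deriv (fun q => lam ε C (q, t)) p * br (C p t) (Cpp C p t)
        + lam ε C (p, t) * br (C p t) (Cppp C p t)) t := by
    have h := hasDerivAt_br htC0 htC2
    rw [congrFun hphi_fun p, hPd2Phi p] at h
    convert h using 1
    simp only [br, Prod.fst_add, Prod.snd_add, Prod.smul_fst, Prod.smul_snd, smul_eq_mul]
    ring
  have htD : HasDerivAt (fun τ => br (Cp C p τ) (Cppp C p τ))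
      (-2 * ε * br (Cp C p t) (Cppp C p t)
        + 4 * deriv (fun q => lam ε C (q, t)) p * br (Cp C p t) (Cppp C p t)
        + 3 * deriv (deriv (fun q => lam ε C (q, t))) p * br (Cp C p t) (Cpp C p t)
        + lam ε C (p, t) * br (Cpp C p t) (Cppp C p t)
        + lam ε C (p, t) * br (Cp C p t) (pd (D3 C) (p, t))) t := by
    have h := hasDerivAt_br htC1 htC3
    rw [hPdPhi p, hPd3Phi] at h
    convert h using 1
    simp only [br, Prod.fst_add, Prod.snd_add, Prod.smul_fst, Prod.smul_snd, smul_eq_mul]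
    ring
  have harg : ε * (br (Cp C p t) (Cpp C p t) / br (C p t) (Cp C p t)) ≠ 0 :=
    ne_of_gt (hreg p t ht).2
  -- time derivative of the metric
  have htMet : HasDerivAt (fun τ => met ε C p τ)
      (ε * (((-2 * ε * br (Cp C p t) (Cpp C p t)
            + 3 * deriv (fun q => lam ε C (q, t)) p * br (Cp C p t) (Cpp C p t)
            + lam ε C (p, t) * br (Cp C p t) (Cppp C p t)) * br (C p t) (Cp C p t)
          - br (Cp C p t) (Cpp C p t) * (-2 * ε * br (C p t) (Cp C p t)
            + deriv (fun q => lam ε C (q, t)) p * br (C p t) (Cp C p t)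
            + lam ε C (p, t) * br (C p t) (Cpp C p t))) / br (C p t) (Cp C p t) ^ 2)
        / (2 * met ε C p t)) t := by
    have h := (Real.hasDerivAt_sqrt harg).comp t ((htB.div htA ha).const_mul ε)
    have h2 : HasDerivAt (fun τ => met ε C p τ)
        (1 / (2 * Real.sqrt (ε * (br (Cp C p t) (Cpp C p t) / br (C p t) (Cp C p t)))) *
          (ε * (((-2 * ε * br (Cp C p t) (Cpp C p t)
            + 3 * deriv (fun q => lam ε C (q, t)) p * br (Cp C p t) (Cpp C p t)
            + lam ε C (p, t) * br (Cp C p t) (Cppp C p t)) * br (C p t) (Cp C p t)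
          - br (Cp C p t) (Cpp C p t) * (-2 * ε * br (C p t) (Cp C p t)
            + deriv (fun q => lam ε C (q, t)) p * br (C p t) (Cp C p t)
            + lam ε C (p, t) * br (C p t) (Cpp C p t))) / br (C p t) (Cp C p t) ^ 2))) t := by
      simpa [Function.comp_def, met] using h
    convert h2 using 1
    rw [show met ε C p t
        = Real.sqrt (ε * (br (Cp C p t) (Cpp C p t) / br (C p t) (Cp C p t))) from rfl]
    ring
  -- the p-slice of lam written explicitly, and its derivative
  have hlam_fun : (fun q => lam ε C (q, t)) = fun q =>
      ε * (3 * br (Cp C q t) (Cpp C q t) * br (C q t) (Cpp C q t)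
        - br (C q t) (Cp C q t) * br (Cp C q t) (Cppp C q t))
        / (2 * br (Cp C q t) (Cpp C q t) ^ 2) := funext fun q => lam_eq hI hF ht q
  have hden0 : 2 * br (Cp C p t) (Cpp C p t) ^ 2 ≠ 0 :=
    mul_ne_zero two_ne_zero (pow_ne_zero 2 hbne)
  have hLd1 : HasDerivAt (fun q => lam ε C (q, t))
      ((ε * (3 * br (Cp C p t) (Cppp C p t) * br (C p t) (Cpp C p t)
          + 3 * br (Cp C p t) (Cpp C p t) * (br (Cp C p t) (Cpp C p t) + br (C p t) (Cppp C p t))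
          - (br (C p t) (Cpp C p t) * br (Cp C p t) (Cppp C p t)
            + br (C p t) (Cp C p t) * (br (Cpp C p t) (Cppp C p t)
              + br (Cp C p t) (pd (D3 C) (p, t))))) * (2 * br (Cp C p t) (Cpp C p t) ^ 2)
        - ε * (3 * br (Cp C p t) (Cpp C p t) * br (C p t) (Cpp C p t)
          - br (C p t) (Cp C p t) * br (Cp C p t) (Cppp C p t))
          * (2 * (2 * br (Cp C p t) (Cpp C p t) * br (Cp C p t) (Cppp C p t))))
        / (2 * br (Cp C p t) (Cpp C p t) ^ 2) ^ 2) p := by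
    rw [hlam_fun]
    have hnum := ((((brB_deriv hI hF ht p).const_mul 3).mul (brC_deriv hI hF ht p)).sub
      ((brA_deriv hI hF ht p).mul (brD_deriv hI hF ht p))).const_mul ε
    have hden := ((brB_deriv hI hF ht p).pow 2).const_mul 2
    have h := hnum.div hden hden0
    refine h.congr_deriv ?_
    simp only [Pi.mul_apply, Pi.sub_apply, Pi.pow_apply]
    simp only [br]
    ring
  have hlam0 : lam ε C (p, t) = ε * (3 * br (Cp C p t) (Cpp C p t) * br (C p t) (Cpp C p t)
      - br (C p t) (Cp C p t) * br (Cp C p t) (Cppp C p t))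
      / (2 * br (Cp C p t) (Cpp C p t) ^ 2) := lam_eq hI hF ht p
  have hlam1 := hLd1.deriv
  -- quadratic bracket relation eliminating [C_pp, C_ppp]
  have hm0 : br (C p t) (Cp C p t) * br (Cpp C p t) (Cppp C p t)
      = br (C p t) (Cpp C p t) * br (Cp C p t) (Cppp C p t)
        - br (Cp C p t) (Cpp C p t) * br (C p t) (Cppp C p t) := by
    simp only [br]; ring
  have hm' : br (Cpp C p t) (Cppp C p t)
      = (br (C p t) (Cpp C p t) * br (Cp C p t) (Cppp C p t)
        - br (Cp C p t) (Cpp C p t) * br (C p t) (Cppp C p t)) / br (C p t) (Cp C p t) := by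
    rw [eq_div_iff ha]
    linarith [hm0]
  -- the spatial derivative of the curvature
  have hcurv_fun : (fun q => curv ε C q t) = fun q => met ε C q t * lam ε C (q, t) :=
    funext fun q => curv_eq hreg hI hF hε ht q
  have hKp : HasDerivAt (fun q => curv ε C q t)
      (ε * ((br (Cp C p t) (Cppp C p t) * br (C p t) (Cp C p t)
          - br (Cp C p t) (Cpp C p t) * br (C p t) (Cpp C p t)) / br (C p t) (Cp C p t) ^ 2)
        / (2 * met ε C p t) * lam ε C (p, t)
        + met ε C p t * deriv (fun q => lam ε C (q, t)) p) p := by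
    rw [hcurv_fun]
    exact (met_deriv hreg hI hF ht p).mul ((hLdiff p).hasDerivAt)
  -- Goal 1
  have hG1 : deriv (fun τ => met ε C p τ) t = deriv (fun q => curv ε C q t) p := by
    rw [htMet.deriv, hKp.deriv]
    rw [hlam0, hlam1, hm', hb2]
    rcases hε with h | h <;> subst h <;> field_simp <;> ring
  -- time derivative of lam is zero
  have hnumt := (((htB.const_mul 3).mul htCc).sub (htA.mul htD)).const_mul ε
  have hdent := (htB.pow 2).const_mul 2
  have hQt := hnumt.div hdent hden0
  have hLt : HasDerivAt (fun τ => lam ε C (p, τ)) 0 t := by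
    have h0 : HasDerivAt (fun τ => ε * (3 * br (Cp C p τ) (Cpp C p τ) * br (C p τ) (Cpp C p τ)
        - br (C p τ) (Cp C p τ) * br (Cp C p τ) (Cppp C p τ))
        / (2 * br (Cp C p τ) (Cpp C p τ) ^ 2)) 0 t := by
      refine hQt.congr_deriv ?_
      simp only [Pi.mul_apply, Pi.sub_apply, Pi.pow_apply]
      rw [hlam0, hlam1, hm', hb2]
      rcases hε with h | h <;> subst h <;> field_simp <;> ring
    refine h0.congr_of_eventuallyEq ?_
    filter_upwards [hI.mem_nhds ht] with τ hτ
    exact lam_eq hI hF hτ p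
  -- time derivative of the curvature
  have hKt : HasDerivAt (fun τ => curv ε C p τ)
      (ε * (((-2 * ε * br (Cp C p t) (Cpp C p t)
            + 3 * deriv (fun q => lam ε C (q, t)) p * br (Cp C p t) (Cpp C p t)
            + lam ε C (p, t) * br (Cp C p t) (Cppp C p t)) * br (C p t) (Cp C p t)
          - br (Cp C p t) (Cpp C p t) * (-2 * ε * br (C p t) (Cp C p t)
            + deriv (fun q => lam ε C (q, t)) p * br (C p t) (Cp C p t)
            + lam ε C (p, t) * br (C p t) (Cpp C p t))) / br (C p t) (Cp C p t) ^ 2)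
        / (2 * met ε C p t) * lam ε C (p, t) + met ε C p t * 0) t := by
    have h := htMet.mul hLt
    refine h.congr_of_eventuallyEq ?_
    filter_upwards [hI.mem_nhds ht] with τ hτ
    exact curv_eq hreg hI hF hε hτ p
  have hKpGT : deriv (fun q => curv ε C q t) p
      = ε * (((-2 * ε * br (Cp C p t) (Cpp C p t)
            + 3 * deriv (fun q => lam ε C (q, t)) p * br (Cp C p t) (Cpp C p t)
            + lam ε C (p, t) * br (Cp C p t) (Cppp C p t)) * br (C p t) (Cp C p t)
          - br (Cp C p t) (Cpp C p t) * (-2 * ε * br (C p t) (Cp C p t)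
            + deriv (fun q => lam ε C (q, t)) p * br (C p t) (Cp C p t)
            + lam ε C (p, t) * br (C p t) (Cpp C p t))) / br (C p t) (Cp C p t) ^ 2)
        / (2 * met ε C p t) := hG1.symm.trans htMet.deriv
  refine ⟨hG1, ?_, ?_⟩
  · rw [hKt.deriv, curv_eq hreg hI hF hε ht p,
      show DsR ε C (fun q τ => curv ε C q τ) p t
        = (1 / met ε C p t) * deriv (fun q => curv ε C q t) p from rfl, hKpGT]
    field_simp
    ring
  · rw [hKt.deriv, curv_eq hreg hI hF hε ht p, hKpGT]
    field_simp
    ring
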